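/- arXiv:1606.08431 — 4 statements merged into one kernel-verified Lean document; each statement's English description precedes it below -/
import Mathlib

section
/- Let G : EuclideanSpace ℝ (Fin n) → ℝ be continuously differentiable with gradient ∇G, let Δt > 0, and suppose y⁺, y ∈ EuclideanSpace ℝ (Fin n) satisfy the average vector field (AVF) step y⁺ = y − Δt · ∫_0^1 ∇G(τ·y⁺ + (1−τ)·y) dτ. Then G(y⁺) − G(y) = −(1/Δt)·‖y⁺ − y‖², and in particular G(y⁺) ≤ G(y). -/
/-!
By the fundamental theorem of calculus along the segment from `y` to `y⁺`,
`G y⁺ - G y = ⟪y⁺ - y, ∫₀¹ ∇G(τ y⁺ + (1 - τ) y) dτ⟫`, and the AVF step says precisely that this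
averaged gradient equals `-(y⁺ - y) / Δt`.
-/

open MeasureTheory
open scoped InnerProductSpace

theorem hasDerivAt_smul_add_one_sub_smul {E : Type*} [NormedAddCommGroup E] [NormedSpace ℝ E]
    (a b : E) (τ : ℝ) : HasDerivAt (fun τ : ℝ => τ • b + (1 - τ) • a) (b - a) τ :=
  (((hasDerivAt_id τ).smul_const b).add
    (((hasDerivAt_id τ).const_sub 1).smul_const a)).congr_deriv (by simp [sub_eq_add_neg])

section InnerProductSpace

variable {E : Type*} [NormedAddCommGroup E] [InnerProductSpace ℝ E]

theorem sub_eq_inner_integral_gradient_segment [CompleteSpace E] {G : E → ℝ} {G' : E → E}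
    (hG : ∀ x, HasGradientAt G (G' x) x) (hG' : Continuous G') (a b : E) :
    G b - G a = ⟪b - a, ∫ τ in (0:ℝ)..1, G' (τ • b + (1 - τ) • a)⟫_ℝ := by
  have hG'_seg : Continuous fun τ : ℝ => G' (τ • b + (1 - τ) • a) := by fun_prop
  have hderiv (τ : ℝ) : HasDerivAt (fun τ : ℝ => G (τ • b + (1 - τ) • a))
      ⟪b - a, G' (τ • b + (1 - τ) • a)⟫_ℝ τ := by
    simpa [Function.comp_def, real_inner_comm] using
      (hG _).hasFDerivAt.comp_hasDerivAt τ (hasDerivAt_smul_add_one_sub_smul a b τ)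
  have hcomm := (innerSL ℝ (b - a)).intervalIntegral_comp_comm (μ := volume)
    (hG'_seg.intervalIntegrable 0 1)
  simp only [innerSL_apply_apply] at hcomm
  rw [← hcomm, intervalIntegral.integral_eq_sub_of_hasDerivAt (fun τ _ => hderiv τ)
    ((continuous_const.inner hG'_seg).intervalIntegrable 0 1)]
  simp

theorem inner_sub_eq_neg_one_div_mul_norm_sq_of_eq_sub_smul {x y v : E} {h : ℝ}
    (hstep : y = x - h • v) : ⟪y - x, v⟫_ℝ = -(1 / h) * ‖y - x‖ ^ 2 := by
  rcases eq_or_ne h 0 with rfl | hh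
  · simp [hstep]
  · rw [hstep, sub_sub_cancel_left, norm_neg, norm_smul, inner_neg_left, real_inner_smul_left,
      real_inner_self_eq_norm_sq, mul_pow, Real.norm_eq_abs, sq_abs]
    field_simp

end InnerProductSpace

/-- Unconditional energy decrease of the average vector field (AVF) method
for the gradient system `ẏ = -∇G(y)`: if `y⁺ = y - Δt ∫_0^1 ∇G(τ y⁺ + (1-τ) y) dτ` with
`Δt > 0`, then `G y⁺ - G y = -(1/Δt) ‖y⁺ - y‖²`, so in particular `G y⁺ ≤ G y`. -/
theorem avf_energy_decrease {n : ℕ} (G : EuclideanSpace ℝ (Fin n) → ℝ)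
    (G' : EuclideanSpace ℝ (Fin n) → EuclideanSpace ℝ (Fin n))
    (hG : ∀ x, HasGradientAt G (G' x) x) (hG' : Continuous G')
    (Δt : ℝ) (hΔt : 0 < Δt) (yp y : EuclideanSpace ℝ (Fin n))
    (hstep : yp = y - Δt • ∫ τ in (0:ℝ)..1, G' (τ • yp + (1 - τ) • y)) :
    G yp - G y = -(1 / Δt) * ‖yp - y‖ ^ 2 ∧ G yp ≤ G y := by
  have henergy : G yp - G y = -(1 / Δt) * ‖yp - y‖ ^ 2 := by
    rw [sub_eq_inner_integral_gradient_segment hG hG' y yp,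
      inner_sub_eq_neg_one_div_mul_norm_sq_of_eq_sub_smul hstep]
  have hdissipation : 0 ≤ 1 / Δt * ‖yp - y‖ ^ 2 := by positivity
  exact ⟨henergy, by linarith⟩
end

section
/- Let M ∈ ℝ^{𝒩×𝒩} be a symmetric positive definite matrix, let A ∈ ℝ^{𝒩×𝒩} be symmetric, and let N : EuclideanSpace ℝ (Fin 𝒩) → ℝ be continuously differentiable with gradient f. Define the discrete energy E(u) = (1/2)·⟪u, A·u⟫ + N(u). Let Δt > 0 and suppose u⁺, u⁰ ∈ EuclideanSpace ℝ (Fin 𝒩) satisfy the SIPG–AVF fully discrete step M·(u⁺ − u⁰) + (Δt/2)·A·(u⁺ + u⁰) + Δt · ∫_0^1 f(τ·u⁺ + (1−τ)·u⁰) dτ = 0. Then E(u⁺) − E(u⁰) = −(1/Δt)·⟪u⁺ − u⁰, M·(u⁺ − u⁰)⟫, and in particular E(u⁺) ≤ E(u⁰) for any time step size Δt > 0. -/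
open MeasureTheory Matrix
open scoped InnerProductSpace

/-!
Pair the AVF step with `u⁺ - u⁰`. Because `A` is symmetric, `⟪u⁺ - u⁰, A (u⁺ + u⁰)⟫` is the
increment of the quadratic form `⟪u, A u⟫`, and by the fundamental theorem of calculus along
the segment from `u⁰` to `u⁺`, `⟪u⁺ - u⁰, ∫₀¹ f(τ u⁺ + (1 - τ) u⁰) dτ⟫ = N u⁺ - N u⁰`: the
averaged vector field is a discrete gradient of `N`. So the paired step equation reads
`⟪u⁺ - u⁰, M (u⁺ - u⁰)⟫ + Δt (E u⁺ - E u⁰) = 0`, and `M` is positive.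
-/

section

variable {E : Type*} [NormedAddCommGroup E] [InnerProductSpace ℝ E]

theorem LinearMap.IsSymmetric.inner_map_self_sub_inner_map_self {T : E →ₗ[ℝ] E}
    (hT : T.IsSymmetric) (x y : E) :
    ⟪x, T x⟫_ℝ - ⟪y, T y⟫_ℝ = ⟪x - y, T (x + y)⟫_ℝ := by
  simp only [map_add, inner_add_right, inner_sub_left]
  linarith [hT y x, real_inner_comm x (T y)]

theorem inner_sub_integral_gradient_segment [CompleteSpace E] {N : E → ℝ} {f : E → E}
    (hN : ∀ u, HasGradientAt N (f u) u) (hf : Continuous f) (x y : E) :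
    ⟪y - x, ∫ τ in (0 : ℝ)..1, f (τ • y + (1 - τ) • x)⟫_ℝ = N y - N x := by
  set γ : ℝ → E := ⇑(AffineMap.lineMap x y : ℝ →ᵃ[ℝ] E)
  have hγ : ∀ τ : ℝ, τ • y + (1 - τ) • x = γ τ := fun τ => by
    simp only [γ, AffineMap.lineMap_apply_module, add_comm]
  have hfγ : Continuous (fun τ => f (γ τ)) := hf.comp AffineMap.lineMap_continuous
  have hderiv : ∀ τ, HasDerivAt (N ∘ γ) ⟪y - x, f (γ τ)⟫_ℝ τ := fun τ => by
    rw [real_inner_comm]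
    simpa using (hN (γ τ)).hasFDerivAt.comp_hasDerivAt τ AffineMap.hasDerivAt_lineMap
  have hinner := (innerSL ℝ (y - x)).intervalIntegral_comp_comm
    (hfγ.intervalIntegrable (μ := volume) 0 1)
  simp only [innerSL_apply_apply] at hinner
  simp_rw [hγ, ← hinner]
  rw [intervalIntegral.integral_eq_sub_of_hasDerivAt (fun τ _ => hderiv τ)
    ((continuous_const.inner hfγ).intervalIntegrable _ _)]
  simp [γ]

end

/-- Unconditional energy stability of the SIPG–AVF fully discrete
full order model: with mass matrix `M` (symmetric positive definite), symmetric stiffness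
matrix `A`, nonlinear vector `f = ∇N`, and discrete energy `E u = (1/2)⟪u, Au⟫ + N u`,
one AVF step `M (u⁺ - u⁰) + (Δt/2) A (u⁺ + u⁰) + Δt ∫_0^1 f(τ u⁺ + (1-τ) u⁰) dτ = 0`
gives `E u⁺ - E u⁰ = -(1/Δt) ⟪u⁺ - u⁰, M (u⁺ - u⁰)⟫ ≤ 0`. -/
theorem sipg_avf_energy_stable {𝒩 : ℕ} (M A : Matrix (Fin 𝒩) (Fin 𝒩) ℝ)
    (hM : M.PosDef) (hA : A.IsSymm)
    (N : EuclideanSpace ℝ (Fin 𝒩) → ℝ)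
    (f : EuclideanSpace ℝ (Fin 𝒩) → EuclideanSpace ℝ (Fin 𝒩))
    (hN : ∀ u, HasGradientAt N (f u) u) (hf : Continuous f)
    (E : EuclideanSpace ℝ (Fin 𝒩) → ℝ)
    (hE : ∀ u : EuclideanSpace ℝ (Fin 𝒩),
      E u = (1 / 2) * ⟪u, Matrix.toEuclideanLin A u⟫_ℝ + N u)
    (Δt : ℝ) (hΔt : 0 < Δt) (up u0 : EuclideanSpace ℝ (Fin 𝒩))
    (hstep : Matrix.toEuclideanLin M (up - u0)
        + (Δt / 2) • Matrix.toEuclideanLin A (up + u0)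
        + Δt • (∫ τ in (0:ℝ)..1, f (τ • up + (1 - τ) • u0)) = 0) :
    E up - E u0
        = -(1 / Δt) * ⟪up - u0, Matrix.toEuclideanLin M (up - u0)⟫_ℝ
      ∧ E up ≤ E u0 := by
  have hM_nonneg : 0 ≤ ⟪up - u0, toEuclideanLin M (up - u0)⟫_ℝ :=
    (isPositive_toEuclideanLin_iff.mpr hM.posSemidef).inner_nonneg_right _
  have hquad := (isSymmetric_toEuclideanLin_iff.mpr (isHermitian_iff_isSymm.mpr hA))
    |>.inner_map_self_sub_inner_map_self up u0
  have hpaired := congrArg (⟪up - u0, ·⟫_ℝ) hstep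
  simp only [inner_add_right, real_inner_smul_right, inner_zero_right,
    inner_sub_integral_gradient_segment hN hf] at hpaired
  have henergy : E up - E u0 = -(1 / Δt) * ⟪up - u0, toEuclideanLin M (up - u0)⟫_ℝ := by
    rw [hE, hE]
    field_simp
    linear_combination 2 * hpaired + Δt * hquad
  refine ⟨henergy, ?_⟩
  have := mul_nonneg (one_div_pos.mpr hΔt).le hM_nonneg
  linarith
end

section
/- Let M ∈ ℝ^{𝒩×𝒩} be symmetric positive definite, A ∈ ℝ^{𝒩×𝒩} symmetric, N : EuclideanSpace ℝ (Fin 𝒩) → ℝ continuously differentiable with gradient f, and E(u) = (1/2)·⟪u, A·u⟫ + N(u). Let Δt > 0 and let (uⁿ)_{n=0}^{J} be a sequence in EuclideanSpace ℝ (Fin 𝒩) satisfying, for every n < J, the SIPG–AVF step M·(u^{n+1} − uⁿ) + (Δt/2)·A·(u^{n+1} + uⁿ) + Δt·∫_0^1 f(τ·u^{n+1} + (1−τ)·uⁿ) dτ = 0. Then the discrete energy sequence is nonincreasing: E(uⁿ) ≤ E(uᵐ) for all m ≤ n ≤ J. -/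
/-!
The averaged vector field `∫₀¹ f(τ v + (1 - τ) w) dτ` is a discrete gradient of `N`: by the
fundamental theorem of calculus along the segment from `w` to `v`, its inner product with `v - w`
is exactly `N v - N w`. Pairing the scheme with `v - w = u^{n+1} - uⁿ` and using the symmetry of
`A` (so that `⟪v - w, A (v + w)⟫ = ⟪v, A v⟫ - ⟪w, A w⟫`) therefore gives the discrete dissipation
identity `Δt (E v - E w) = -⟪v - w, M (v - w)⟫ ≤ 0`.
-/

open MeasureTheory Matrix
open scoped InnerProductSpace

section

variable {F : Type*} [NormedAddCommGroup F] [InnerProductSpace ℝ F]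

noncomputable def averagedVectorField (f : F → F) (v w : F) : F :=
  ∫ τ in (0 : ℝ)..1, f (τ • v + (1 - τ) • w)

theorem HasGradientAt.hasDerivAt_comp_segment [CompleteSpace F] {N : F → ℝ} {g v w : F} {τ : ℝ}
    (hN : HasGradientAt N g (τ • v + (1 - τ) • w)) :
    HasDerivAt (fun τ : ℝ ↦ N (τ • v + (1 - τ) • w)) ⟪g, v - w⟫_ℝ τ := by
  have hpath : HasDerivAt (fun τ : ℝ ↦ τ • v + (1 - τ) • w) (v - w) τ := by
    convert ((hasDerivAt_id' τ).smul_const v).fun_add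
      (((hasDerivAt_id' τ).const_sub 1).smul_const w) using 1
    module
  simpa [Function.comp_def] using hN.hasFDerivAt.comp_hasDerivAt τ hpath

theorem inner_sub_averagedVectorField [CompleteSpace F] {N : F → ℝ} {f : F → F}
    (hN : ∀ u, HasGradientAt N (f u) u) (hf : Continuous f) (v w : F) :
    ⟪v - w, averagedVectorField f v w⟫_ℝ = N v - N w := by
  have hcont : Continuous fun τ : ℝ ↦ f (τ • v + (1 - τ) • w) := by fun_prop
  calc ⟪v - w, averagedVectorField f v w⟫_ℝ
      = ∫ τ in (0 : ℝ)..1, ⟪f (τ • v + (1 - τ) • w), v - w⟫_ℝ := by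
        simp_rw [averagedVectorField, real_inner_comm (v - w)]
        exact ((innerSL ℝ (v - w)).intervalIntegral_comp_comm (hcont.intervalIntegrable 0 1)).symm
    _ = N v - N w := by
        rw [intervalIntegral.integral_eq_sub_of_hasDerivAt
          (fun τ _ ↦ (hN _).hasDerivAt_comp_segment)
          ((hcont.inner continuous_const).intervalIntegrable 0 1)]
        simp

theorem LinearMap.IsSymmetric.inner_sub_map_add {T : F →ₗ[ℝ] F} (hT : T.IsSymmetric) (v w : F) :
    ⟪v - w, T (v + w)⟫_ℝ = ⟪v, T v⟫_ℝ - ⟪w, T w⟫_ℝ := by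
  have hvw : ⟪v, T w⟫_ℝ = ⟪w, T v⟫_ℝ := by rw [← hT, real_inner_comm]
  simp only [map_add, inner_add_right, inner_sub_left, hvw]
  ring

noncomputable def quadraticEnergy (A : F →ₗ[ℝ] F) (N : F → ℝ) (u : F) : ℝ :=
  1 / 2 * ⟪u, A u⟫_ℝ + N u

theorem mul_quadraticEnergy_sub_eq_of_step {M A : F →ₗ[ℝ] F} (hA : A.IsSymmetric) {N : F → ℝ}
    {Δt : ℝ} {v w g : F} (hg : ⟪v - w, g⟫_ℝ = N v - N w)
    (hstep : M (v - w) + (Δt / 2) • A (v + w) + Δt • g = 0) :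
    Δt * (quadraticEnergy A N v - quadraticEnergy A N w) = -⟪v - w, M (v - w)⟫_ℝ := by
  have h := congrArg (⟪v - w, ·⟫_ℝ) hstep
  simp only [inner_add_right, inner_smul_right, inner_zero_right, hA.inner_sub_map_add, hg] at h
  rw [quadraticEnergy, quadraticEnergy]
  linarith

theorem quadraticEnergy_le_of_averagedVectorField_step [CompleteSpace F] {M A : F →ₗ[ℝ] F}
    (hM : M.IsPositive) (hA : A.IsSymmetric) {N : F → ℝ} {f : F → F}
    (hN : ∀ u, HasGradientAt N (f u) u) (hf : Continuous f) {Δt : ℝ} (hΔt : 0 < Δt) {v w : F}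
    (hstep : M (v - w) + (Δt / 2) • A (v + w) + Δt • averagedVectorField f v w = 0) :
    quadraticEnergy A N v ≤ quadraticEnergy A N w := by
  have hdiss :=
    mul_quadraticEnergy_sub_eq_of_step hA (inner_sub_averagedVectorField hN hf v w) hstep
  have hMvw : 0 ≤ ⟪v - w, M (v - w)⟫_ℝ := hM.inner_nonneg_right (v - w)
  nlinarith

end

/-- The discrete energy sequence of the SIPG–AVF full order model is
nonincreasing: if `(uⁿ)ₙ` satisfies, for every `n < J`, the AVF step
`M (u^{n+1} - uⁿ) + (Δt/2) A (u^{n+1} + uⁿ) + Δt ∫_0^1 f(τ u^{n+1} + (1-τ) uⁿ) dτ = 0`,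
then `E (uⁿ) ≤ E (uᵐ)` for all `m ≤ n ≤ J`, where `E u = (1/2)⟪u, Au⟫ + N u` and `f = ∇N`. -/
theorem sipg_avf_energy_nonincreasing {𝒩 : ℕ} (M A : Matrix (Fin 𝒩) (Fin 𝒩) ℝ)
    (hM : M.PosDef) (hA : A.IsSymm)
    (N : EuclideanSpace ℝ (Fin 𝒩) → ℝ)
    (f : EuclideanSpace ℝ (Fin 𝒩) → EuclideanSpace ℝ (Fin 𝒩))
    (hN : ∀ u, HasGradientAt N (f u) u) (hf : Continuous f)
    (E : EuclideanSpace ℝ (Fin 𝒩) → ℝ)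
    (hE : ∀ u : EuclideanSpace ℝ (Fin 𝒩),
      E u = (1 / 2) * ⟪u, Matrix.toEuclideanLin A u⟫_ℝ + N u)
    (Δt : ℝ) (hΔt : 0 < Δt) (J : ℕ) (u : ℕ → EuclideanSpace ℝ (Fin 𝒩))
    (hstep : ∀ n < J, Matrix.toEuclideanLin M (u (n + 1) - u n)
        + (Δt / 2) • Matrix.toEuclideanLin A (u (n + 1) + u n)
        + Δt • (∫ τ in (0:ℝ)..1, f (τ • u (n + 1) + (1 - τ) • u n)) = 0) :
    ∀ m n : ℕ, m ≤ n → n ≤ J → E (u n) ≤ E (u m) := by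
  have hMpos : (toEuclideanLin M).IsPositive := isPositive_toEuclideanLin_iff.mpr hM.posSemidef
  have hAsym : (toEuclideanLin A).IsSymmetric :=
    isSymmetric_toEuclideanLin_iff.mpr (isHermitian_iff_isSymm.mpr hA)
  obtain rfl : E = quadraticEnergy (toEuclideanLin A) N := funext hE
  have hdecay : ∀ n < J, quadraticEnergy (toEuclideanLin A) N (u (n + 1))
      ≤ quadraticEnergy (toEuclideanLin A) N (u n) := fun n hn ↦
    quadraticEnergy_le_of_averagedVectorField_step hMpos hAsym hN hf hΔt (hstep n hn)
  intro m n hmn hnJ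
  exact antitoneOn_of_add_one_le (f := fun k ↦ quadraticEnergy (toEuclideanLin A) N (u k))
    Set.ordConnected_Iic (fun k _ _ hk ↦ hdecay k hk) (hmn.trans hnJ) hnJ hmn
end

section
/- Let A ∈ ℝ^{𝒩×𝒩} be symmetric, N : EuclideanSpace ℝ (Fin 𝒩) → ℝ continuously differentiable with gradient f, E(u) = (1/2)·⟪u, A·u⟫ + N(u), let R ∈ ℝ^{𝒩×𝒩} be invertible with M = Rᵀ R, let Ψ ∈ ℝ^{𝒩×N} satisfy Ψᵀ M Ψ = I_N, set A_r = Ψᵀ A Ψ, and let ĝ : EuclideanSpace ℝ (Fin 𝒩) → EuclideanSpace ℝ (Fin 𝒩) be continuous. Let Δt > 0 and let (u_rⁿ)_{n=0}^{J} be a sequence in EuclideanSpace ℝ (Fin N) satisfying, for every n < J, the DEIM-reduced AVF step (u_r^{n+1} − u_rⁿ) + (Δt/2)·A_r·(u_r^{n+1} + u_rⁿ) + Δt·∫_0^1 Ψᵀ ĝ(Ψ·zₙ(τ)) dτ = 0 with zₙ(τ) = τ·u_r^{n+1} + (1−τ)·u_rⁿ. Let C > 0 satisfy ‖f(Ψ·zₙ(τ))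 − ĝ(Ψ·zₙ(τ))‖₂ ≤ C for all n < J and τ ∈ [0,1]. If Δt ≤ (min_{n < J} ‖u_r^{n+1} − u_rⁿ‖₂) / (‖R^{-1}‖₂ · C), then the reduced energy sequence is nonincreasing: E(Ψ·u_rⁿ) ≤ E(Ψ·u_rᵐ) for all m ≤ n ≤ J. -/
/-!
For a symmetric `L`, the average vector field discrete gradient
`∇̄E(a, b) = ½ L (b + a) + ∫₀¹ ∇N(τ b + (1 - τ) a) dτ` of `E x = ½⟪x, L x⟫ + N x` satisfies
`E b - E a = ⟪∇̄E(a, b), b - a⟫` (fundamental theorem of calculus along the segment), so the exact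
AVF step `b - a = -Δt ∇̄E(a, b)` conserves energy up to the dissipation `-‖b - a‖² / Δt`. In the
DEIM step the nonlinearity `f` is replaced by `ĝ`, which adds `⟪∇̄E_f - ∇̄E_ĝ, b - a⟫` to the energy
change. Since `RΨ` has orthonormal columns, `Ψᵀ = (RΨ)ᵀ R⁻ᵀ` has spectral norm at most `‖R⁻¹‖`,
so this term is at most `‖R⁻¹‖ C ‖b - a‖`, which the step size condition keeps below
`‖b - a‖² / Δt`.
-/

open MeasureTheory Matrix
open scoped InnerProductSpace

/-- The spectral (operator 2-)norm of a real matrix, i.e. the operator norm of the induced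
linear map between Euclidean spaces. -/
noncomputable def spectralNorm2 {m n : ℕ} (A : Matrix (Fin m) (Fin n) ℝ) : ℝ :=
  ‖LinearMap.toContinuousLinearMap (Matrix.toEuclideanLin A)‖

namespace Matrix

open scoped Matrix.Norms.L2Operator

variable {𝕜 : Type*} [RCLike 𝕜] {m n : Type*} [Fintype m] [Fintype n] [DecidableEq n]

lemma l2_opNorm_one_le : ‖(1 : Matrix n n 𝕜)‖ ≤ 1 := by
  rw [cstar_norm_def, map_one]
  exact ContinuousLinearMap.norm_id_le

lemma l2_opNorm_le_one_of_conjTranspose_mul_self_eq_one {B : Matrix m n 𝕜} (h : Bᴴ * B = 1) :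
    ‖B‖ ≤ 1 := by
  have hsq := l2_opNorm_conjTranspose_mul_self B
  rw [h] at hsq
  nlinarith [l2_opNorm_one_le (𝕜 := 𝕜) (n := n), norm_nonneg B]

lemma norm_toEuclideanLin_le (B : Matrix m n 𝕜) (x : EuclideanSpace 𝕜 n) :
    ‖toEuclideanLin B x‖ ≤ ‖B‖ * ‖x‖ :=
  (LinearMap.toContinuousLinearMap (toEuclideanLin B)).le_opNorm x

lemma isSymmetric_toEuclideanLin_transpose_mul_mul {A : Matrix m m ℝ} (hA : A.IsSymm)
    (Ψ : Matrix m n ℝ) : (toEuclideanLin (Ψᵀ * A * Ψ)).IsSymmetric := by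
  rw [isSymmetric_toEuclideanLin_iff, ← conjTranspose_eq_transpose_of_trivial]
  exact isHermitian_conjTranspose_mul_mul Ψ (isHermitian_iff_isSymm.mpr hA)

variable [DecidableEq m]

lemma toEuclideanLin_mul_apply {l : Type*} (B : Matrix l m 𝕜) (C : Matrix m n 𝕜)
    (x : EuclideanSpace 𝕜 n) :
    toEuclideanLin (B * C) x = toEuclideanLin B (toEuclideanLin C x) := by
  simp [toLpLin_mul_same]

lemma l2_opNorm_transpose (B : Matrix m n ℝ) : ‖Bᵀ‖ = ‖B‖ :=
  conjTranspose_eq_transpose_of_trivial B ▸ l2_opNorm_conjTranspose B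

lemma l2_opNorm_transpose_le_of_transpose_mul_mul_eq_one {R : Matrix m m ℝ} (hR : IsUnit R)
    {Ψ : Matrix m n ℝ} (hΨ : Ψᵀ * (Rᵀ * R) * Ψ = 1) : ‖Ψᵀ‖ ≤ ‖R⁻¹‖ := by
  have hRΨ : (R * Ψ)ᴴ * (R * Ψ) = 1 := by
    rw [conjTranspose_eq_transpose_of_trivial, transpose_mul, ← hΨ]
    simp only [Matrix.mul_assoc]
  have hfactor : Ψᵀ = (R * Ψ)ᵀ * R⁻¹ᵀ := by
    rw [← transpose_mul, nonsing_inv_mul_cancel_left R Ψ ((isUnit_iff_isUnit_det R).mp hR)]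
  calc ‖Ψᵀ‖ = ‖(R * Ψ)ᵀ * R⁻¹ᵀ‖ := by rw [← hfactor]
    _ ≤ ‖(R * Ψ)ᵀ‖ * ‖R⁻¹ᵀ‖ := l2_opNorm_mul _ _
    _ = ‖R * Ψ‖ * ‖R⁻¹‖ := by rw [l2_opNorm_transpose, l2_opNorm_transpose]
    _ ≤ ‖R⁻¹‖ := mul_le_of_le_one_left (norm_nonneg _)
      (l2_opNorm_le_one_of_conjTranspose_mul_self_eq_one hRΨ)

lemma norm_toEuclideanLin_transpose_le_spectralNorm2_inv {p q : ℕ}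
    {R : Matrix (Fin p) (Fin p) ℝ} (hR : IsUnit R) {Ψ : Matrix (Fin p) (Fin q) ℝ}
    (hΨ : Ψᵀ * (Rᵀ * R) * Ψ = 1) (e : EuclideanSpace ℝ (Fin p)) :
    ‖toEuclideanLin Ψᵀ e‖ ≤ spectralNorm2 R⁻¹ * ‖e‖ :=
  (norm_toEuclideanLin_le Ψᵀ e).trans <| mul_le_mul_of_nonneg_right
    (l2_opNorm_transpose_le_of_transpose_mul_mul_eq_one hR hΨ) (norm_nonneg e)

lemma inner_toEuclideanLin_transpose (B : Matrix m n ℝ) (x : EuclideanSpace ℝ m)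
    (y : EuclideanSpace ℝ n) :
    ⟪toEuclideanLin Bᵀ x, y⟫_ℝ = ⟪x, toEuclideanLin B y⟫_ℝ := by
  rw [← conjTranspose_eq_transpose_of_trivial, toEuclideanLin_conjTranspose_eq_adjoint,
    LinearMap.adjoint_inner_left]

theorem _root_.HasGradientAt.comp_toEuclideanLin {N : EuclideanSpace ℝ m → ℝ}
    {y : EuclideanSpace ℝ m} (B : Matrix m n ℝ) {x : EuclideanSpace ℝ n}
    (h : HasGradientAt N y (toEuclideanLin B x)) :
    HasGradientAt (fun x => N (toEuclideanLin B x)) (toEuclideanLin Bᵀ y) x := by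
  have hdual : InnerProductSpace.toDual ℝ _ (toEuclideanLin Bᵀ y)
      = (InnerProductSpace.toDual ℝ _ y).comp
          (LinearMap.toContinuousLinearMap (toEuclideanLin B)) := by
    ext w
    simp [inner_toEuclideanLin_transpose]
  rw [hasGradientAt_iff_hasFDerivAt] at h ⊢
  rw [hdual]
  exact h.comp x (LinearMap.toContinuousLinearMap (toEuclideanLin B)).hasFDerivAt

end Matrix

section AVF

variable {F : Type*} [NormedAddCommGroup F] [InnerProductSpace ℝ F]

theorem LinearMap.IsSymmetric.inner_map_add_sub {T : F →ₗ[ℝ] F} (hT : T.IsSymmetric) (x y : F) :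
    ⟪T (x + y), x - y⟫_ℝ = ⟪x, T x⟫_ℝ - ⟪y, T y⟫_ℝ := by
  have hcross : ⟪T y, x⟫_ℝ = ⟪T x, y⟫_ℝ := by rw [hT, real_inner_comm]
  simp only [map_add, inner_add_left, inner_sub_right, hcross, real_inner_comm (T x) x,
    real_inner_comm (T y) y]
  ring

noncomputable def energy (L : F →ₗ[ℝ] F) (N : F → ℝ) (x : F) : ℝ :=
  1 / 2 * ⟪x, L x⟫_ℝ + N x

/-- The average vector field discrete gradient of `energy L N` when `G = ∇N`; the AVF step
with time step `Δt` from `a` to `b` is `b - a + Δt • avfGradient L G a b = 0`. -/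
noncomputable def avfGradient (L : F →ₗ[ℝ] F) (G : F → F) (a b : F) : F :=
  (1 / 2 : ℝ) • L (b + a) + ∫ τ in (0:ℝ)..1, G (τ • b + (1 - τ) • a)

theorem avfGradient_sub_avfGradient {G G' : F → F} (hG : Continuous G) (hG' : Continuous G')
    (L : F →ₗ[ℝ] F) (a b : F) :
    avfGradient L G a b - avfGradient L G' a b
      = ∫ τ in (0:ℝ)..1, (G (τ • b + (1 - τ) • a) - G' (τ • b + (1 - τ) • a)) := by
  rw [avfGradient, avfGradient, add_sub_add_left_eq_sub, intervalIntegral.integral_sub]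
  all_goals exact (by fun_prop : Continuous _).intervalIntegrable 0 1

variable [CompleteSpace F]

theorem sub_eq_inner_integral_gradient {N : F → ℝ} {G : F → F}
    (hN : ∀ x, HasGradientAt N (G x) x) (hG : Continuous G) (a b : F) :
    N b - N a = ⟪∫ τ in (0:ℝ)..1, G (τ • b + (1 - τ) • a), b - a⟫_ℝ := by
  have hsegment (τ : ℝ) : HasDerivAt (fun t : ℝ => t • b + (1 - t) • a) (b - a) τ := by
    refine (((hasDerivAt_id τ).smul_const b).add
      (((hasDerivAt_id τ).const_sub 1).smul_const a)).congr_deriv ?_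
    rw [one_smul, neg_one_smul, sub_eq_add_neg]
  have hderiv (τ : ℝ) : HasDerivAt (fun t : ℝ => N (t • b + (1 - t) • a))
      ⟪b - a, G (τ • b + (1 - τ) • a)⟫_ℝ τ := by
    simpa [Function.comp_def, real_inner_comm] using
      (hN _).hasFDerivAt.comp_hasDerivAt τ (hsegment τ)
  have hint : IntervalIntegrable (fun τ : ℝ => G (τ • b + (1 - τ) • a)) volume 0 1 :=
    (by fun_prop : Continuous fun τ : ℝ => G (τ • b + (1 - τ) • a)).intervalIntegrable 0 1
  rw [real_inner_comm, ← innerSL_apply_apply,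
    ← (innerSL ℝ (b - a)).intervalIntegral_comp_comm hint]
  simp only [innerSL_apply_apply]
  rw [intervalIntegral.integral_eq_sub_of_hasDerivAt (fun τ _ => hderiv τ)
    ((by fun_prop : Continuous _).intervalIntegrable 0 1)]
  simp

theorem energy_sub_eq_inner_avfGradient {L : F →ₗ[ℝ] F} (hL : L.IsSymmetric) {N : F → ℝ}
    {G : F → F} (hN : ∀ x, HasGradientAt N (G x) x) (hG : Continuous G) (a b : F) :
    energy L N b - energy L N a = ⟪avfGradient L G a b, b - a⟫_ℝ := by
  rw [energy, energy, avfGradient, inner_add_left, real_inner_smul_left, hL.inner_map_add_sub,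
    ← sub_eq_inner_integral_gradient hN hG]
  ring

theorem energy_le_of_avfStep {L : F →ₗ[ℝ] F} (hL : L.IsSymmetric) {N : F → ℝ} {G G' : F → F}
    (hN : ∀ x, HasGradientAt N (G x) x) (hG : Continuous G) (hG' : Continuous G')
    {Δt K : ℝ} (hΔt : 0 < Δt) {a b : F} (hstep : b - a + Δt • avfGradient L G' a b = 0)
    (hK : ∀ τ ∈ Set.Icc (0:ℝ) 1,
      ‖G (τ • b + (1 - τ) • a) - G' (τ • b + (1 - τ) • a)‖ ≤ K)
    (hΔtK : Δt * K ≤ ‖b - a‖) :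
    energy L N b ≤ energy L N a := by
  have hpert : ‖avfGradient L G a b - avfGradient L G' a b‖ ≤ K := by
    rw [avfGradient_sub_avfGradient hG hG']
    simpa using intervalIntegral.norm_integral_le_of_norm_le_const (a := 0) (b := 1)
      fun τ hτ => hK τ (Set.Ioc_subset_Icc_self (by rwa [Set.uIoc_of_le zero_le_one] at hτ))
  have hinner : ⟪avfGradient L G a b - avfGradient L G' a b, b - a⟫_ℝ ≤ K * ‖b - a‖ :=
    (real_inner_le_norm _ _).trans (mul_le_mul_of_nonneg_right hpert (norm_nonneg _))
  have hstep_inner : Δt * ⟪avfGradient L G' a b, b - a⟫_ℝ = -‖b - a‖ ^ 2 := by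
    rw [← real_inner_smul_left, eq_neg_of_add_eq_zero_right hstep, inner_neg_left,
      real_inner_self_eq_norm_sq]
  have hdiff : Δt * (energy L N b - energy L N a)
      = Δt * ⟪avfGradient L G a b - avfGradient L G' a b, b - a⟫_ℝ - ‖b - a‖ ^ 2 := by
    rw [energy_sub_eq_inner_avfGradient hL hN hG, inner_sub_left, mul_sub, hstep_inner]
    ring
  nlinarith [norm_nonneg (b - a)]

end AVF

lemma energy_toEuclideanLin_apply {m n : Type*} [Fintype m] [Fintype n] [DecidableEq m]
    [DecidableEq n] (A : Matrix m m ℝ) (N : EuclideanSpace ℝ m → ℝ) (Ψ : Matrix m n ℝ)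
    (x : EuclideanSpace ℝ n) :
    energy (toEuclideanLin A) N (toEuclideanLin Ψ x)
      = energy (toEuclideanLin (Ψᵀ * A * Ψ)) (fun x => N (toEuclideanLin Ψ x)) x := by
  rw [energy, energy, toEuclideanLin_mul_apply, toEuclideanLin_mul_apply,
    ← inner_toEuclideanLin_transpose Ψᵀ, transpose_transpose]

theorem deim_rom_global_energy_stability_general {𝒩 Nr : ℕ}
    (A : Matrix (Fin 𝒩) (Fin 𝒩) ℝ) (hA : A.IsSymm)
    (N : EuclideanSpace ℝ (Fin 𝒩) → ℝ)
    (f : EuclideanSpace ℝ (Fin 𝒩) → EuclideanSpace ℝ (Fin 𝒩))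
    (hN : ∀ u, HasGradientAt N (f u) u) (hf : Continuous f)
    (E : EuclideanSpace ℝ (Fin 𝒩) → ℝ)
    (hE : ∀ u : EuclideanSpace ℝ (Fin 𝒩),
      E u = (1 / 2) * ⟪u, Matrix.toEuclideanLin A u⟫_ℝ + N u)
    (R : Matrix (Fin 𝒩) (Fin 𝒩) ℝ) (hR : IsUnit R)
    (M : Matrix (Fin 𝒩) (Fin 𝒩) ℝ) (hM : M = Rᵀ * R)
    (Ψ : Matrix (Fin 𝒩) (Fin Nr) ℝ) (hΨ : Ψᵀ * M * Ψ = 1)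
    (Ar : Matrix (Fin Nr) (Fin Nr) ℝ) (hAr : Ar = Ψᵀ * A * Ψ)
    (g : EuclideanSpace ℝ (Fin 𝒩) → EuclideanSpace ℝ (Fin 𝒩)) (hg : Continuous g)
    (Δt : ℝ) (hΔt : 0 < Δt) (J : ℕ) (u : ℕ → EuclideanSpace ℝ (Fin Nr))
    (z : ℕ → ℝ → EuclideanSpace ℝ (Fin Nr))
    (hz : ∀ n τ, z n τ = τ • u (n + 1) + (1 - τ) • u n)
    (hstep : ∀ n < J, (u (n + 1) - u n)
        + (Δt / 2) • Matrix.toEuclideanLin Ar (u (n + 1) + u n)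
        + Δt • (∫ τ in (0:ℝ)..1,
            Matrix.toEuclideanLin Ψᵀ (g (Matrix.toEuclideanLin Ψ (z n τ)))) = 0)
    (C : ℝ)
    (hbound : ∀ n < J, ∀ τ ∈ Set.Icc (0:ℝ) 1,
      ‖f (Matrix.toEuclideanLin Ψ (z n τ)) - g (Matrix.toEuclideanLin Ψ (z n τ))‖ ≤ C)
    (hstepsize : Δt ≤ (⨅ n : Fin J, ‖u (n + 1) - u n‖) / (spectralNorm2 R⁻¹ * C)) :
    ∀ m n : ℕ, m ≤ n → n ≤ J → E (Matrix.toEuclideanLin Ψ (u n))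
        ≤ E (Matrix.toEuclideanLin Ψ (u m)) := by
  obtain rfl : E = energy (toEuclideanLin A) N := funext hE
  obtain rfl : z = fun n τ => τ • u (n + 1) + (1 - τ) • u n := funext₂ hz
  subst hM hAr
  have hΨc : Continuous (toEuclideanLin Ψ) := LinearMap.continuous_of_finiteDimensional _
  have hΨTc : Continuous (toEuclideanLin Ψᵀ) := LinearMap.continuous_of_finiteDimensional _
  have hdecrease (k : ℕ) (hk : k < J) :
      energy (toEuclideanLin A) N (toEuclideanLin Ψ (u (k + 1)))
        ≤ energy (toEuclideanLin A) N (toEuclideanLin Ψ (u k)) := by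
    have hC : 0 ≤ C := (norm_nonneg _).trans (hbound k hk 0 ⟨le_rfl, zero_le_one⟩)
    rw [energy_toEuclideanLin_apply, energy_toEuclideanLin_apply]
    refine energy_le_of_avfStep (isSymmetric_toEuclideanLin_transpose_mul_mul hA Ψ)
      (G := fun x => toEuclideanLin Ψᵀ (f (toEuclideanLin Ψ x)))
      (G' := fun x => toEuclideanLin Ψᵀ (g (toEuclideanLin Ψ x)))
      (fun x => (hN _).comp_toEuclideanLin Ψ) (by fun_prop) (by fun_prop) hΔt ?_
      (K := spectralNorm2 R⁻¹ * C) (fun τ hτ => ?_) ?_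
    · rw [avfGradient, smul_add, smul_smul, ← add_assoc, mul_one_div]
      exact hstep k hk
    · rw [← map_sub]
      exact (norm_toEuclideanLin_transpose_le_spectralNorm2_inv hR hΨ _).trans
        (mul_le_mul_of_nonneg_left (hbound k hk τ hτ) (norm_nonneg _))
    · exact (mul_le_of_le_div₀ (Real.iInf_nonneg fun _ => norm_nonneg _)
        (mul_nonneg (norm_nonneg _) hC) hstepsize).trans
        (ciInf_le ⟨0, Set.forall_mem_range.2 fun _ => norm_nonneg _⟩ (⟨k, hk⟩ : Fin J))
  intro m n hmn hnJ
  exact antitoneOn_of_succ_le (f := fun k => energy (toEuclideanLin A) N (toEuclideanLin Ψ (u k)))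
    Set.ordConnected_Iic (fun k _ _ hk => hdecrease k (Order.succ_le_iff.mp hk))
    (hmn.trans hnJ) hnJ hmn

/-- Global time-step condition for energy stability of the DEIM reduced
order model: with symmetric stiffness matrix `A`, discrete energy `E u = (1/2)⟪u, Au⟫ + N u`
with `f = ∇N`, mass matrix `M = Rᵀ R` (`R` invertible), `M`-orthonormal basis matrix `Ψ`,
reduced stiffness matrix `A_r = Ψᵀ A Ψ`, DEIM approximation `ĝ` of `f`, and a sequence
`(u_rⁿ)` of DEIM-reduced AVF steps whose DEIM errors are uniformly bounded by `C > 0`, if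
`Δt ≤ (min_{n<J} ‖u_r^{n+1} - u_rⁿ‖₂) / (‖R⁻¹‖₂ C)` then the reduced energy sequence is
nonincreasing: `E (Ψ u_rⁿ) ≤ E (Ψ u_rᵐ)` for all `m ≤ n ≤ J`. -/
theorem deim_rom_global_energy_stability {𝒩 Nr : ℕ}
    (A : Matrix (Fin 𝒩) (Fin 𝒩) ℝ) (hA : A.IsSymm)
    (N : EuclideanSpace ℝ (Fin 𝒩) → ℝ)
    (f : EuclideanSpace ℝ (Fin 𝒩) → EuclideanSpace ℝ (Fin 𝒩))
    (hN : ∀ u, HasGradientAt N (f u) u) (hf : Continuous f)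
    (E : EuclideanSpace ℝ (Fin 𝒩) → ℝ)
    (hE : ∀ u : EuclideanSpace ℝ (Fin 𝒩),
      E u = (1 / 2) * ⟪u, Matrix.toEuclideanLin A u⟫_ℝ + N u)
    (R : Matrix (Fin 𝒩) (Fin 𝒩) ℝ) (hR : IsUnit R)
    (M : Matrix (Fin 𝒩) (Fin 𝒩) ℝ) (hM : M = Rᵀ * R)
    (Ψ : Matrix (Fin 𝒩) (Fin Nr) ℝ) (hΨ : Ψᵀ * M * Ψ = 1)
    (Ar : Matrix (Fin Nr) (Fin Nr) ℝ) (hAr : Ar = Ψᵀ * A * Ψ)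
    (g : EuclideanSpace ℝ (Fin 𝒩) → EuclideanSpace ℝ (Fin 𝒩)) (hg : Continuous g)
    (Δt : ℝ) (hΔt : 0 < Δt) (J : ℕ) (u : ℕ → EuclideanSpace ℝ (Fin Nr))
    (z : ℕ → ℝ → EuclideanSpace ℝ (Fin Nr))
    (hz : ∀ n τ, z n τ = τ • u (n + 1) + (1 - τ) • u n)
    (hstep : ∀ n < J, (u (n + 1) - u n)
        + (Δt / 2) • Matrix.toEuclideanLin Ar (u (n + 1) + u n)
        + Δt • (∫ τ in (0:ℝ)..1,
            Matrix.toEuclideanLin Ψᵀ (g (Matrix.toEuclideanLin Ψ (z n τ)))) = 0)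
    (C : ℝ) (hC : 0 < C)
    (hbound : ∀ n < J, ∀ τ ∈ Set.Icc (0:ℝ) 1,
      ‖f (Matrix.toEuclideanLin Ψ (z n τ)) - g (Matrix.toEuclideanLin Ψ (z n τ))‖ ≤ C)
    (hstepsize : Δt ≤ (⨅ n : Fin J, ‖u (n + 1) - u n‖) / (spectralNorm2 R⁻¹ * C)) :
    ∀ m n : ℕ, m ≤ n → n ≤ J → E (Matrix.toEuclideanLin Ψ (u n))
        ≤ E (Matrix.toEuclideanLin Ψ (u m)) :=
  deim_rom_global_energy_stability_general A hA N f hN hf E hE R hR M hM Ψ hΨ Ar hAr g hg Δt hΔt J u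
    z hz hstep C hbound hstepsize
end
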